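/- Let e_1, ..., e_n be i.i.d. real random variables with mean μ and variance σ², and let z = (1/n)·Σ e_i be their empirical mean. Let X be a real random variable independent of (e_1,...,e_n). Then E[X·z] = E[X·e_1] and Var(X·z) ≤ Var(X·e_1), with strict inequality when σ² > 0, n > 1, and E[X²] > 0. -/

import Mathlib

open MeasureTheory ProbabilityTheory Finset

/-!
Independence of `X` from the traces factors every moment of a product: `E[X·Y] = E[X]·E[Y]` and
`Var(X·Y) = E[X²]·(Var Y + E[Y]²) - (E[X]·E[Y])²`. The empirical mean `z` of `n` pairwise
independent traces has the mean `m` of a single trace but variance `σ²/n` instead of `σ²`, so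
`X·z` and `X·e₀` have equal means and the variance of `X·z` is smaller by `E[X²]·σ²·(1 - 1/n)`.
-/

namespace ProbabilityTheory

variable {Ω : Type*} [MeasurableSpace Ω] {μ : Measure Ω}

lemma integral_fun_sq_eq_variance_add_sq [IsProbabilityMeasure μ] {Y : Ω → ℝ}
    (hY : MemLp Y 2 μ) : μ[fun ω => Y ω ^ 2] = variance Y μ + μ[Y] ^ 2 := by
  rw [variance_eq_sub hY, sub_add_cancel]
  rfl

lemma IndepFun.variance_fun_mul [IsProbabilityMeasure μ] {X Y : Ω → ℝ} (hXY : IndepFun X Y μ)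
    (hX : AEStronglyMeasurable X μ) (hY : MemLp Y 2 μ)
    (hXY2 : MemLp (fun ω => X ω * Y ω) 2 μ) :
    variance (fun ω => X ω * Y ω) μ =
      μ[fun ω => X ω ^ 2] * (variance Y μ + μ[Y] ^ 2) - (μ[X] * μ[Y]) ^ 2 := by
  have hXY_sq : IndepFun (fun ω => X ω ^ 2) (fun ω => Y ω ^ 2) μ :=
    hXY.comp (measurable_id.pow_const 2) (measurable_id.pow_const 2)
  rw [variance_eq_sub hXY2, ← integral_fun_sq_eq_variance_add_sq hY,
    ← hXY.integral_fun_mul_eq_mul_integral hX hY.1,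
    ← hXY_sq.integral_fun_mul_eq_mul_integral (hX.pow 2) (hY.1.pow 2)]
  simp only [Pi.pow_apply, mul_pow]

variable {ι : Type*} [Fintype ι] {e : ι → Ω → ℝ}

lemma memLp_fun_sum_div {p : ENNReal} (he : ∀ i, MemLp (e i) p μ) (c : ℝ) :
    MemLp (fun ω => (∑ i, e i ω) / c) p μ := by
  simpa only [div_eq_mul_inv] using (memLp_finsetSum univ fun i _ => he i).mul_const c⁻¹

lemma integral_fun_sum_div_card [Nonempty ι] {m : ℝ} (he : ∀ i, Integrable (e i) μ)
    (hmean : ∀ i, μ[e i] = m) :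
    μ[fun ω => (∑ i, e i ω) / Fintype.card ι] = m := by
  rw [integral_div, integral_finsetSum univ fun i _ => he i]
  simp [hmean]

lemma variance_fun_sum_div_card {σ2 : ℝ} (he : ∀ i, MemLp (e i) 2 μ)
    (hindep : Pairwise fun i j => IndepFun (e i) (e j) μ) (hvar : ∀ i, variance (e i) μ = σ2) :
    variance (fun ω => (∑ i, e i ω) / Fintype.card ι) μ = σ2 / Fintype.card ι := by
  have hsum : variance (∑ i, e i) μ = Fintype.card ι * σ2 := by
    rw [IndepFun.variance_sum (fun i _ => he i) fun i _ j _ hij => hindep hij]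
    simp [hvar]
  simp_rw [div_eq_inv_mul, variance_const_mul, ← Finset.sum_apply, hsum]
  rcases eq_or_ne (Fintype.card ι : ℝ) 0 with hcard | hcard
  · simp [hcard]
  · field_simp

end ProbabilityTheory

theorem empirical_mean_trace_update_general
    {Ω : Type*} [MeasurableSpace Ω] (μ : Measure Ω) [IsProbabilityMeasure μ]
    (n : ℕ) (hn : 0 < n) (e : Fin n → Ω → ℝ) (X : Ω → ℝ) (m σ2 : ℝ)
    (hiid_indep : iIndepFun e μ)
    (hmean : ∀ i, μ[e i] = m)
    (hvar : ∀ i, variance (e i) μ = σ2)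
    (hXe : IndepFun X (fun ω => (fun i => e i ω)) μ)
    (hXL2 : MemLp X 2 μ) (heL2 : ∀ i, MemLp (e i) 2 μ)
    (hXz : MemLp (fun ω => X ω * ((∑ i, e i ω) / n)) 2 μ)
    (hXe0 : MemLp (fun ω => X ω * e ⟨0, hn⟩ ω) 2 μ) :
    μ[fun ω => X ω * ((∑ i, e i ω) / n)] = μ[fun ω => X ω * e ⟨0, hn⟩ ω] ∧
    variance (fun ω => X ω * ((∑ i, e i ω) / n)) μ ≤ variance (fun ω => X ω * e ⟨0, hn⟩ ω) μ ∧
    (0 < σ2 → 1 < n → 0 < μ[fun ω => X ω ^ 2] →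
      variance (fun ω => X ω * ((∑ i, e i ω) / n)) μ < variance (fun ω => X ω * e ⟨0, hn⟩ ω) μ) := by
  have : Nonempty (Fin n) := ⟨⟨0, hn⟩⟩
  have hzL2 : MemLp (fun ω => (∑ i, e i ω) / n) 2 μ := memLp_fun_sum_div heL2 n
  have hz_mean : μ[fun ω => (∑ i, e i ω) / n] = m := by
    simpa only [Fintype.card_fin] using
      integral_fun_sum_div_card (fun i => (heL2 i).integrable one_le_two) hmean
  have hz_var : variance (fun ω => (∑ i, e i ω) / n) μ = σ2 / n := by
    simpa only [Fintype.card_fin] using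
      variance_fun_sum_div_card heL2 (fun i j hij => hiid_indep.indepFun hij) hvar
  have hXz_indep : IndepFun X (fun ω => (∑ i, e i ω) / n) μ :=
    hXe.comp measurable_id ((measurable_sum univ fun i _ => measurable_pi_apply i).div_const _)
  have hXe0_indep : IndepFun X (e ⟨0, hn⟩) μ := hXe.comp measurable_id (measurable_pi_apply _)
  have hσ2 : 0 ≤ σ2 := hvar ⟨0, hn⟩ ▸ variance_nonneg _ _
  rw [hXz_indep.integral_fun_mul_eq_mul_integral hXL2.1 hzL2.1,
    hXe0_indep.integral_fun_mul_eq_mul_integral hXL2.1 (heL2 _).1,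
    hXz_indep.variance_fun_mul hXL2.1 hzL2 hXz, hXe0_indep.variance_fun_mul hXL2.1 (heL2 _) hXe0,
    hz_mean, hz_var, hmean, hvar]
  refine ⟨rfl, ?_, fun hσ2_pos hn_gt hX2_pos => ?_⟩
  · gcongr
    exact div_le_self hσ2 (by exact_mod_cast hn)
  · gcongr
    exact div_lt_self hσ2_pos (by exact_mod_cast hn_gt)

/-- Abstract form of Proposition 2: let `e ⟨0, hn⟩, ..., e (n-1)` be i.i.d. real random variables
with mean `m` and variance `σ²`, let `z = (1/n)·Σᵢ e i` be their empirical mean, and let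
`X` be a real random variable independent of the tuple `(e ⟨0, hn⟩, ..., e (n-1))`. Then
`E[X·z] = E[X·e ⟨0, hn⟩]` and `Var(X·z) ≤ Var(X·e ⟨0, hn⟩)`, with strict inequality when
`σ² > 0`, `n > 1` and `E[X²] > 0`. -/
theorem empirical_mean_trace_update
    {Ω : Type*} [MeasurableSpace Ω] (μ : Measure Ω) [IsProbabilityMeasure μ]
    (n : ℕ) (hn : 0 < n) (e : Fin n → Ω → ℝ) (X : Ω → ℝ) (m σ2 : ℝ)
    (hmeas : ∀ i, Measurable (e i))
    (hiid_indep : iIndepFun e μ)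
    (hiid_ident : ∀ i, IdentDistrib (e i) (e ⟨0, hn⟩) μ μ)
    (hmean : ∀ i, μ[e i] = m)
    (hvar : ∀ i, variance (e i) μ = σ2)
    (hXe : IndepFun X (fun ω => (fun i => e i ω)) μ)
    (hXL2 : MemLp X 2 μ) (heL2 : ∀ i, MemLp (e i) 2 μ)
    (hXz : MemLp (fun ω => X ω * ((∑ i, e i ω) / n)) 2 μ)
    (hXe0 : MemLp (fun ω => X ω * e ⟨0, hn⟩ ω) 2 μ) :
    μ[fun ω => X ω * ((∑ i, e i ω) / n)] = μ[fun ω => X ω * e ⟨0, hn⟩ ω] ∧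
    variance (fun ω => X ω * ((∑ i, e i ω) / n)) μ ≤ variance (fun ω => X ω * e ⟨0, hn⟩ ω) μ ∧
    (0 < σ2 → 1 < n → 0 < μ[fun ω => X ω ^ 2] →
      variance (fun ω => X ω * ((∑ i, e i ω) / n)) μ < variance (fun ω => X ω * e ⟨0, hn⟩ ω) μ) :=
  empirical_mean_trace_update_general μ n hn e X m σ2 hiid_indep hmean hvar hXe hXL2 heL2 hXz hXe0
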